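/- arXiv:2301.03438 — 2 statements merged into one kernel-verified Lean document; each statement's English description precedes it below -/
import Mathlib

section
/- Let H be a real Hilbert space and V ⊆ H a closed subspace. Let Δt > 0, N ≥ 1, let θ₀, θ₁, …, θ_N ∈ V, and let f₀, …, f_{N−1} ∈ H and δ₁, …, δ_N ∈ H satisfy, for every 1 ≤ n ≤ N: ⟨θₙ − fₙ₋₁, v⟩ = −⟨δₙ, v⟩ for all v ∈ V, and ‖fₙ₋₁‖ = ‖θₙ₋₁‖. Then ‖θ_N‖² + Σ_{n=1}^{N} ‖θₙ − fₙ₋₁‖² ≤ ‖θ₀‖² + (2/Δt)·Σ_{n=1}^{N} ‖δₙ‖² + (Δt/2)·Σ_{n=1}^{N} ‖θₙ‖². -/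
/-!
Testing the error equation with `θₙ ∈ V` itself gives the energy identity
`‖θₙ‖² - ‖fₙ₋₁‖² + ‖θₙ - fₙ₋₁‖² = -2⟪δₙ, θₙ⟫`. Since `‖fₙ₋₁‖ = ‖θₙ₋₁‖`, the left side
telescopes when summed over `n`, and Young's inequality with weight `Δt` bounds the right side.
-/

open RealInnerProductSpace Finset

theorem sum_Icc_one_sub_pred {G : Type*} [AddCommGroup G] (g : ℕ → G) (N : ℕ) :
    ∑ n ∈ Icc 1 N, (g n - g (n - 1)) = g N - g 0 := by
  rw [← Ico_add_one_right_eq_Icc, sum_Ico_eq_sum_range]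
  simpa [add_comm 1] using sum_range_sub g N

section InnerProductSpace

variable {F : Type*} [NormedAddCommGroup F] [InnerProductSpace ℝ F]

theorem norm_sq_sub_norm_sq_add_norm_sub_sq (u f : F) :
    ‖u‖ ^ 2 - ‖f‖ ^ 2 + ‖u - f‖ ^ 2 = 2 * ⟪u - f, u⟫ := by
  rw [norm_sub_sq_real, inner_sub_left, real_inner_self_eq_norm_sq, real_inner_comm]
  ring

theorem norm_sq_sub_norm_sq_add_norm_sub_sq_le {ε : ℝ} (hε : 0 < ε) {u f d : F}
    (h : ⟪u - f, u⟫ = -⟪d, u⟫) :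
    ‖u‖ ^ 2 - ‖f‖ ^ 2 + ‖u - f‖ ^ 2 ≤ (2 / ε) * ‖d‖ ^ 2 + (ε / 2) * ‖u‖ ^ 2 := by
  have young := two_mul_le_add_mul_sq (a := ‖d‖) (b := ‖u‖) (div_pos two_pos hε)
  rw [inv_div] at young
  calc ‖u‖ ^ 2 - ‖f‖ ^ 2 + ‖u - f‖ ^ 2 = 2 * -⟪d, u⟫ := by
        rw [norm_sq_sub_norm_sq_add_norm_sub_sq, h]
    _ ≤ 2 * ‖d‖ * ‖u‖ := by
        rw [mul_assoc]
        gcongr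
        exact (neg_le_abs _).trans (abs_real_inner_le_norm d u)
    _ ≤ (2 / ε) * ‖d‖ ^ 2 + (ε / 2) * ‖u‖ ^ 2 := young

end InnerProductSpace

theorem lg_second_stage_recursion_inequality_general
    {H : Type*} [NormedAddCommGroup H] [InnerProductSpace ℝ H]
    (V : Submodule ℝ H)
    (Δt : ℝ) (hΔt : 0 < Δt) (N : ℕ)
    (θ f δ : ℕ → H) (hθV : ∀ n ≤ N, θ n ∈ V)
    (herr : ∀ n ∈ Finset.Icc 1 N, ∀ v ∈ V, ⟪θ n - f (n - 1), v⟫ = -⟪δ n, v⟫)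
    (hiso : ∀ n ∈ Finset.Icc 1 N, ‖f (n - 1)‖ = ‖θ (n - 1)‖) :
    ‖θ N‖ ^ 2 + ∑ n ∈ Finset.Icc 1 N, ‖θ n - f (n - 1)‖ ^ 2 ≤
      ‖θ 0‖ ^ 2 + (2 / Δt) * ∑ n ∈ Finset.Icc 1 N, ‖δ n‖ ^ 2 +
        (Δt / 2) * ∑ n ∈ Finset.Icc 1 N, ‖θ n‖ ^ 2 := by
  have step : ∀ n ∈ Icc 1 N, ‖θ n‖ ^ 2 - ‖θ (n - 1)‖ ^ 2 + ‖θ n - f (n - 1)‖ ^ 2 ≤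
      (2 / Δt) * ‖δ n‖ ^ 2 + (Δt / 2) * ‖θ n‖ ^ 2 := by
    intro n hn
    rw [← hiso n hn]
    exact norm_sq_sub_norm_sq_add_norm_sub_sq_le hΔt (herr n hn _ (hθV n (mem_Icc.1 hn).2))
  have summed := sum_le_sum step
  rw [sum_add_distrib, sum_Icc_one_sub_pred (fun n ↦ ‖θ n‖ ^ 2), sum_add_distrib,
    ← mul_sum, ← mul_sum] at summed
  linarith

/-- **Second-stage recursion inequality for the conventional LG method.**
If `θₙ ∈ V`, `⟨θₙ − fₙ₋₁, v⟩ = −⟨δₙ, v⟩` for all `v ∈ V`, and `‖fₙ₋₁‖ = ‖θₙ₋₁‖`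
for `1 ≤ n ≤ N`, then
`‖θ_N‖² + Σ‖θₙ − fₙ₋₁‖² ≤ ‖θ₀‖² + (2/Δt)Σ‖δₙ‖² + (Δt/2)Σ‖θₙ‖²`. -/
theorem lg_second_stage_recursion_inequality
    {H : Type*} [NormedAddCommGroup H] [InnerProductSpace ℝ H] [CompleteSpace H]
    (V : Submodule ℝ H) (hV : IsClosed (V : Set H))
    (Δt : ℝ) (hΔt : 0 < Δt) (N : ℕ) (hN : 1 ≤ N)
    (θ f δ : ℕ → H) (hθV : ∀ n ≤ N, θ n ∈ V)
    (herr : ∀ n ∈ Finset.Icc 1 N, ∀ v ∈ V, ⟪θ n - f (n - 1), v⟫ = -⟪δ n, v⟫)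
    (hiso : ∀ n ∈ Finset.Icc 1 N, ‖f (n - 1)‖ = ‖θ (n - 1)‖) :
    ‖θ N‖ ^ 2 + ∑ n ∈ Finset.Icc 1 N, ‖θ n - f (n - 1)‖ ^ 2 ≤
      ‖θ 0‖ ^ 2 + (2 / Δt) * ∑ n ∈ Finset.Icc 1 N, ‖δ n‖ ^ 2 +
        (Δt / 2) * ∑ n ∈ Finset.Icc 1 N, ‖θ n‖ ^ 2 :=
  lg_second_stage_recursion_inequality_general V Δt hΔt N θ f δ hθV herr hiso
end

section
/- Let H be a real Hilbert space, V ⊆ H a closed subspace, T₁, …, T_N : H → H linear isometries, Δt > 0, and for each 1 ≤ n ≤ N let Bₙ : H × H → ℝ be a bilinear form with Bₙ(w,w) ≥ 0 for all w ∈ H. Let c_h⁰ ∈ V and, for 1 ≤ n ≤ N, let c_hⁿ ∈ V satisfy ⟨c_hⁿ − Tₙ c_h^{n−1}, v⟩ + Δt·Bₙ(c_hⁿ, v) = 0 for all v ∈ V. Then ‖c_h^N‖² + Σ_{n=1}^{N} ‖c_hⁿ − Tₙ c_h^{n−1}‖² + 2Δt·Σ_{n=1}^{N} Bₙ(c_hⁿ,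 c_hⁿ) ≤ ‖c_h⁰‖². -/
/-!
Testing the scheme against `v = c_hⁿ` and using the polarization identity
`2⟪a - b, a⟫ = ‖a‖² + ‖a - b‖² - ‖b‖²` with `‖Tₙ c_h^{n-1}‖ = ‖c_h^{n-1}‖` gives the one-step
energy identity `‖c_hⁿ‖² + ‖c_hⁿ - Tₙ c_h^{n-1}‖² + 2Δt Bₙ(c_hⁿ, c_hⁿ) = ‖c_h^{n-1}‖²`.
Summing over `n` telescopes.
-/

open RealInnerProductSpace Finset

theorem two_mul_real_inner_sub_self {F : Type*} [NormedAddCommGroup F] [InnerProductSpace ℝ F]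
    (a b : F) : 2 * ⟪a - b, a⟫ = ‖a‖ ^ 2 + ‖a - b‖ ^ 2 - ‖b‖ ^ 2 := by
  rw [norm_sub_sq_real, inner_sub_left, real_inner_self_eq_norm_sq, real_inner_comm]
  ring

theorem add_sum_Icc_eq_of_add_eq_pred {M : Type*} [AddCommMonoid M] (e d : ℕ → M) (N : ℕ)
    (h : ∀ n ∈ Icc 1 N, e n + d n = e (n - 1)) : e N + ∑ n ∈ Icc 1 N, d n = e 0 := by
  induction N with
  | zero => simp
  | succ N ih =>
    rw [sum_Icc_succ_top (Nat.le_add_left 1 N), ← add_assoc, add_right_comm,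
      h (N + 1) (by simp), Nat.add_sub_cancel]
    exact ih fun n hn ↦ h n (Icc_subset_Icc_right N.le_succ hn)

theorem dc_lg_stability_general
    {H : Type*} [NormedAddCommGroup H] [InnerProductSpace ℝ H]
    (V : Submodule ℝ H)
    (N : ℕ) (T : ℕ → H →ₗᵢ[ℝ] H) (Δt : ℝ)
    (B : ℕ → H →ₗ[ℝ] H →ₗ[ℝ] ℝ)
    (ch : ℕ → H) (hchV : ∀ n ∈ Finset.Icc 1 N, ch n ∈ V)
    (hscheme : ∀ n ∈ Finset.Icc 1 N, ∀ v ∈ V,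
      ⟪ch n - T n (ch (n - 1)), v⟫ + Δt * B n (ch n) v = 0) :
    ‖ch N‖ ^ 2 + ∑ n ∈ Finset.Icc 1 N, ‖ch n - T n (ch (n - 1))‖ ^ 2 +
        2 * Δt * ∑ n ∈ Finset.Icc 1 N, B n (ch n) (ch n) ≤ ‖ch 0‖ ^ 2 := by
  have energy_step : ∀ n ∈ Icc 1 N, ‖ch n‖ ^ 2 +
      (‖ch n - T n (ch (n - 1))‖ ^ 2 + 2 * Δt * B n (ch n) (ch n)) = ‖ch (n - 1)‖ ^ 2 := by
    intro n hn
    have tested := hscheme n hn (ch n) (hchV n hn)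
    have polarization := two_mul_real_inner_sub_self (ch n) (T n (ch (n - 1)))
    rw [(T n).norm_map] at polarization
    linarith
  have energy := add_sum_Icc_eq_of_add_eq_pred (fun n ↦ ‖ch n‖ ^ 2) _ N energy_step
  rw [sum_add_distrib, ← mul_sum] at energy
  linarith

/-- **L²-stability of the discontinuity-capturing LG method (Lemma 5.1).**
If each `Bₙ` is a nonnegative bilinear form, the `Tₙ` are linear isometries, and
`⟨c_hⁿ − Tₙ c_h^{n−1}, v⟩ + Δt·Bₙ(c_hⁿ, v) = 0` for all `v ∈ V`, then
`‖c_h^N‖² + Σ‖c_hⁿ − Tₙ c_h^{n−1}‖² + 2Δt·Σ Bₙ(c_hⁿ,c_hⁿ) ≤ ‖c_h⁰‖²`. -/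
theorem dc_lg_stability
    {H : Type*} [NormedAddCommGroup H] [InnerProductSpace ℝ H] [CompleteSpace H]
    (V : Submodule ℝ H) (hV : IsClosed (V : Set H))
    (N : ℕ) (T : ℕ → H →ₗᵢ[ℝ] H) (Δt : ℝ) (hΔt : 0 < Δt)
    (B : ℕ → H →ₗ[ℝ] H →ₗ[ℝ] ℝ) (hB : ∀ n, ∀ w, 0 ≤ B n w w)
    (ch : ℕ → H) (hch0 : ch 0 ∈ V) (hchV : ∀ n ∈ Finset.Icc 1 N, ch n ∈ V)
    (hscheme : ∀ n ∈ Finset.Icc 1 N, ∀ v ∈ V,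
      ⟪ch n - T n (ch (n - 1)), v⟫ + Δt * B n (ch n) v = 0) :
    ‖ch N‖ ^ 2 + ∑ n ∈ Finset.Icc 1 N, ‖ch n - T n (ch (n - 1))‖ ^ 2 +
        2 * Δt * ∑ n ∈ Finset.Icc 1 N, B n (ch n) (ch n) ≤ ‖ch 0‖ ^ 2 :=
  dc_lg_stability_general V N T Δt B ch hchV hscheme
end
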